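/- arXiv:1810.00694 — 3 statements merged into one kernel-verified Lean document; each statement's English description precedes it below -/
import Mathlib

section
/- In a structural causal model, an intervention on a variable X does not change the value of any variable that is not a descendant of X. Precisely: let V be a finite type, R a well-founded parent relation on V, f a family of structural functions with valuation val defined by well-founded recursion, and X : V, x : D. Define the intervened family f[X←x] to equal f on every v ≠ X and to be the constant function returning x at X. Then for every context u : V → E and every variable w such that ¬ Relation.ReflTransGen R X w (i.e., w is not X and not a descendant of X), one has val f[X←x] u w = val f u w; consequently, for any two intervention values x, x' : D, val f[X←x] u w = val f[X←x'] u w. -/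
/-- The valuation of a structural causal model: each variable's value is computed
from its exogenous input and the (recursively computed) values of its parents,
by well-founded recursion on the parent relation `R`. -/
def val {V Ex D : Type*} (R : V → V → Prop) (hR : WellFounded R)
    (f : ∀ v : V, Ex → (∀ w : V, R w v → D) → D) (u : V → Ex) : V → D :=
  hR.fix fun v ih => f v (u v) fun w hw => ih w hw

/-- The intervention `do(X = x)`: the structural function of `X` is replaced by
the constant function returning `x`; all other structural functions are unchanged. -/
def intervene {V Ex D : Type*} [DecidableEq V] (R : V → V → Prop)
    (f : ∀ v : V, Ex → (∀ w : V, R w v → D) → D) (X : V) (x : D) :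
    ∀ v : V, Ex → (∀ w : V, R w v → D) → D :=
  fun v => if v = X then fun _ _ => x else f v

theorem val_apply {V Ex D : Type*} (R : V → V → Prop) (hR : WellFounded R)
    (f : ∀ v : V, Ex → (∀ w : V, R w v → D) → D) (u : V → Ex) (v : V) :
    val R hR f u v = f v (u v) fun w _ => val R hR f u w :=
  hR.fix_eq _ v

theorem val_congr_of_ancestors {V Ex D : Type*} (R : V → V → Prop) (hR : WellFounded R)
    {f g : ∀ v : V, Ex → (∀ w : V, R w v → D) → D} (u : V → Ex) (w : V)
    (hfg : ∀ v, Relation.ReflTransGen R v w → f v = g v) :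
    val R hR f u w = val R hR g u w := by
  induction w using hR.induction with
  | _ w ih =>
    rw [val_apply, val_apply, hfg w .refl]
    congr 1
    funext p hp
    exact ih p hp fun v hv => hfg v (hv.tail hp)

theorem intervene_of_ne {V Ex D : Type*} [DecidableEq V] (R : V → V → Prop)
    (f : ∀ v : V, Ex → (∀ w : V, R w v → D) → D) {X v : V} (x : D) (hv : v ≠ X) :
    intervene R f X x v = f v :=
  if_neg hv

theorem val_intervene_eq_of_not_reflTransGen {V Ex D : Type*} [DecidableEq V]
    (R : V → V → Prop) (hR : WellFounded R)
    (f : ∀ v : V, Ex → (∀ w : V, R w v → D) → D) {X w : V} (x : D) (u : V → Ex)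
    (hw : ¬ Relation.ReflTransGen R X w) :
    val R hR (intervene R f X x) u w = val R hR f u w :=
  val_congr_of_ancestors R hR u w fun _ hv =>
    intervene_of_ne R f x fun hvX => hw (hvX ▸ hv)

theorem val_intervene_eq_of_not_descendant_general {V Ex D : Type*} [DecidableEq V]
    (R : V → V → Prop) (hR : WellFounded R)
    (f : ∀ v : V, Ex → (∀ w : V, R w v → D) → D) (X : V) :
    ∀ (u : V → Ex) (w : V), ¬ Relation.ReflTransGen R X w →
      (∀ x : D, val R hR (intervene R f X x) u w = val R hR f u w) ∧
      (∀ x x' : D,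
        val R hR (intervene R f X x) u w = val R hR (intervene R f X x') u w) := by
  intro u w hw
  have hx (x : D) := val_intervene_eq_of_not_reflTransGen R hR f x u hw
  exact ⟨hx, fun x x' => (hx x).trans (hx x').symm⟩

/-- An intervention on a variable `X` does not change the value of any variable `w`
that is not `X` and not a descendant of `X`; consequently two different intervention
values on `X` give the same value at `w`. -/
theorem val_intervene_eq_of_not_descendant {V Ex D : Type*} [Finite V] [DecidableEq V]
    (R : V → V → Prop) (hR : WellFounded R)
    (f : ∀ v : V, Ex → (∀ w : V, R w v → D) → D) (X : V) :
    ∀ (u : V → Ex) (w : V), ¬ Relation.ReflTransGen R X w →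
      (∀ x : D, val R hR (intervene R f X x) u w = val R hR f u w) ∧
      (∀ x x' : D,
        val R hR (intervene R f X x) u w = val R hR (intervene R f X x') u w) :=
  val_intervene_eq_of_not_descendant_general R hR f X
end

section
/- (Deterministic form of Lemma 1 of Kusner et al., as used in the paper.) Let a structural causal model be given over a finite variable set V with well-founded parent relation R, structural functions f, and valuation val defined by well-founded recursion. Let Ŷ : V be a designated predictor variable and A ⊆ V a set of protected attributes such that no element of A is an ancestor-or-equal of Ŷ (for every X ∈ A, ¬ Relation.ReflTransGen R X Ŷ); equivalently, the structural equation determining Ŷ depends only on variables that are not descendants of A. Then for every context u : V → E and any two assignments a, a' : A → D, the value of Ŷ under the intervention do(A = a) equals its value under do(A = a'): val f[A←a] u Ŷ = val f[A←a'] u Ŷ. -/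
open Classical in
/-- The intervention `do(A = a)`: the structural function of each `X ∈ A` is replaced
by the constant function returning `a X`; all other structural functions are unchanged. -/
noncomputable def interveneSet {V Ex D : Type*} (R : V → V → Prop)
    (f : ∀ v : V, Ex → (∀ w : V, R w v → D) → D) (A : Set V) (a : A → D) :
    ∀ v : V, Ex → (∀ w : V, R w v → D) → D :=
  fun v => if h : v ∈ A then fun _ _ => a ⟨v, h⟩ else f v

section

variable {V Ex D : Type*} {R : V → V → Prop}

theorem val_eq (hR : WellFounded R) (f : ∀ v : V, Ex → (∀ w : V, R w v → D) → D)
    (u : V → Ex) (v : V) :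
    val R hR f u v = f v (u v) fun w _ => val R hR f u w :=
  hR.fix_eq _ v

theorem val_congr_of_eqOn_ancestors (hR : WellFounded R)
    {f g : ∀ v : V, Ex → (∀ w : V, R w v → D) → D} (u : V → Ex) (v : V)
    (hfg : ∀ w, Relation.ReflTransGen R w v → f w = g w) :
    val R hR f u v = val R hR g u v := by
  induction v using hR.induction with
  | _ v ih =>
    rw [val_eq, val_eq, hfg v .refl]
    congr 1
    funext w hw
    exact ih w hw fun x hx => hfg x (hx.tail hw)

theorem interveneSet_of_not_mem (f : ∀ v : V, Ex → (∀ w : V, R w v → D) → D)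
    {A : Set V} (a : A → D) {v : V} (hv : v ∉ A) :
    interveneSet R f A a v = f v :=
  dif_neg hv

end

theorem counterfactual_invariance_of_not_descendant_general {V Ex D : Type*}
    (R : V → V → Prop) (hR : WellFounded R)
    (f : ∀ v : V, Ex → (∀ w : V, R w v → D) → D)
    (Yhat : V) (A : Set V)
    (hA : ∀ X ∈ A, ¬ Relation.ReflTransGen R X Yhat) :
    ∀ (u : V → Ex) (a a' : A → D),
      val R hR (interveneSet R f A a) u Yhat =
        val R hR (interveneSet R f A a') u Yhat := by
  intro u a a'
  refine val_congr_of_eqOn_ancestors hR u Yhat fun w hw => ?_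
  have hwA : w ∉ A := fun h => hA w h hw
  rw [interveneSet_of_not_mem f a hwA, interveneSet_of_not_mem f a' hwA]

/-- (Deterministic form of Lemma 1 of Kusner et al.) If no protected attribute in `A`
is an ancestor-or-equal of the predictor `Ŷ`, then the value of `Ŷ` is invariant under
any two interventions `do(A = a)` and `do(A = a')`. -/
theorem counterfactual_invariance_of_not_descendant {V Ex D : Type*} [Finite V]
    (R : V → V → Prop) (hR : WellFounded R)
    (f : ∀ v : V, Ex → (∀ w : V, R w v → D) → D)
    (Yhat : V) (A : Set V)
    (hA : ∀ X ∈ A, ¬ Relation.ReflTransGen R X Yhat) :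
    ∀ (u : V → Ex) (a a' : A → D),
      val R hR (interveneSet R f A a) u Yhat =
        val R hR (interveneSet R f A a') u Yhat :=
  counterfactual_invariance_of_not_descendant_general R hR f Yhat A hA
end

section
/- (Theorem 1, impossibility of unbiased aggregation of causal graphs, after Bradley, Dietrich and List.) Let V be a finite type with at least three elements and let n ≥ 1 be the number of experts. There is no aggregation rule F mapping each n-tuple of acyclic binary relations on V (universal domain: F is defined on all profiles P : Fin n → (V → V → Bool) in which every P i is acyclic) to a binary relation F P : V → V → Bool, satisfying simultaneously: (Acyclicity) for every profile P of acyclic relations, F P is acyclic; (Unbiasedness) there exists a function g : (Fin n → Bool) → Bool such that for every profile P of acyclic relations and all x y : V, F P x y = g (fun i => P i x y), and g is neutral between positive and negative outcomes: g (fun i => !(b i)) = !(g b) for every b : Fin n → Bool; (Non-dictatorship) there is no index i : Fin n such that F P x y = P i x y for every profile P of acyclic relations and all x, y : V. Here a relation Q : V → V → Bool is acyclic if there is no x : V with Relation.TransGen (fun a b => Q a b = true) x x. -/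
/-!
Applied edgewise, an acyclicity-preserving `g` must reject the empty coalition (otherwise the
empty profile aggregates to a loop), and the coalitions it accepts are closed under
intersection: if `g b`, `g c` but not `g (b ∧ c)`, then by self-duality `g (¬(b ∧ c))`, and
the profile in which expert `i` draws `x → y`, `y → z`, `z → x` according to `b i`, `c i`,
`¬(b i ∧ c i)` has acyclic entries but a three-cycle as aggregate. By self-duality the
accepted coalitions then form an ultrafilter on the finite set of experts; it is principal,
and its generator is a dictator.
-/

/-- A binary relation `Q : V → V → Bool` is acyclic if no vertex lies on a
directed cycle, i.e. there is no `x` with `Relation.TransGen` from `x` to itself. -/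
def AcyclicRel {V : Type*} (Q : V → V → Bool) : Prop :=
  ¬ ∃ x : V, Relation.TransGen (fun a b => Q a b = true) x x

section Acyclic

variable {V : Type*} {Q : V → V → Bool}

theorem acyclicRel_of_rank {α : Type*} [Preorder α] (f : V → α)
    (h : ∀ a b, Q a b = true → f a < f b) : AcyclicRel Q := fun ⟨x, hx⟩ =>
  lt_irrefl (f x) <| Relation.transGen_eq_self.le _ _ (Relation.TransGen.lift f h _ _ hx)

theorem not_acyclicRel_of_loop {x : V} (hx : Q x x = true) : ¬AcyclicRel Q :=
  fun h => h ⟨x, .single hx⟩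

theorem not_acyclicRel_of_three_cycle {x y z : V} (hxy : Q x y = true) (hyz : Q y z = true)
    (hzx : Q z x = true) : ¬AcyclicRel Q :=
  fun h => h ⟨x, .tail (.tail (.single hxy) hyz) hzx⟩

end Acyclic

section Triangle

variable {V : Type*} [DecidableEq V]

def triangleRel (x y z : V) (b c d : Bool) : V → V → Bool := fun u v =>
  (decide (u = x ∧ v = y) && b) || (decide (u = y ∧ v = z) && c) || (decide (u = z ∧ v = x) && d)

theorem triangleRel_rotate (x y z : V) (b c d : Bool) :
    triangleRel x y z b c d = triangleRel y z x c d b := by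
  funext u v
  simp only [triangleRel]
  ac_rfl

variable {x y z : V}

theorem acyclicRel_triangleRel_false (hxy : x ≠ y) (hxz : x ≠ z) (hyz : y ≠ z)
    (b c : Bool) : AcyclicRel (triangleRel x y z b c false) := by
  refine acyclicRel_of_rank (fun v => if v = x then 0 else if v = y then 1 else 2) ?_
  intro u v huv
  simp only [triangleRel, Bool.and_false, Bool.or_false, Bool.or_eq_true, Bool.and_eq_true,
    decide_eq_true_eq] at huv
  rcases huv with ⟨⟨rfl, rfl⟩, -⟩ | ⟨⟨rfl, rfl⟩, -⟩ <;> simp [hxy.symm, hxz.symm, hyz.symm]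

theorem acyclicRel_triangleRel (hxy : x ≠ y) (hxz : x ≠ z) (hyz : y ≠ z) {b c d : Bool}
    (h : (b && c && d) = false) : AcyclicRel (triangleRel x y z b c d) := by
  cases d
  · exact acyclicRel_triangleRel_false hxy hxz hyz b c
  cases b
  · rw [triangleRel_rotate]
    exact acyclicRel_triangleRel_false hyz hxy.symm hxz.symm _ _
  cases c
  · rw [triangleRel_rotate, triangleRel_rotate]
    exact acyclicRel_triangleRel_false hxz.symm hyz.symm hxy _ _
  simp at h

end Triangle

section Dictator

variable {ι : Type*} {g : (ι → Bool) → Bool}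

theorem apply_mono_of_selfDual_of_and
    (hneg : ∀ b, g (fun i => !b i) = !g b) (hfalse : g (fun _ => false) = false)
    (hand : ∀ b c, g b = true → g c = true → g (fun i => b i && c i) = true)
    {b c : ι → Bool} (hbc : ∀ i, b i = true → c i = true) (hb : g b = true) : g c = true := by
  by_contra hc
  have hnc : g (fun i => !c i) = true := (hneg c).trans (by simpa using hc)
  have hdisj : (fun i => b i && !c i) = fun _ => false := by
    funext i
    by_cases h : b i <;> simp_all
  simpa [hdisj, hfalse] using hand b _ hb hnc

theorem exists_eq_apply_of_selfDual_of_and [Finite ι]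
    (hneg : ∀ b, g (fun i => !b i) = !g b) (hfalse : g (fun _ => false) = false)
    (hand : ∀ b c, g b = true → g c = true → g (fun i => b i && c i) = true) :
    ∃ i, ∀ b, g b = b i := by
  classical
  let U : Ultrafilter ι := .ofComplNotMemIff
    { sets := {s | g (fun i => decide (i ∈ s)) = true}
      univ_sets := by simpa [hfalse] using hneg fun _ => false
      sets_of_superset := fun hs hst =>
        apply_mono_of_selfDual_of_and hneg hfalse hand (fun i => by simpa using @hst i) hs
      inter_sets := fun hs ht => by simpa [Set.mem_inter_iff] using hand _ _ hs ht }
    fun s => by simp [hneg]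
  have hU : ∀ s, s ∈ U ↔ g (fun i => decide (i ∈ s)) = true := fun s => Iff.rfl
  obtain ⟨i, hi⟩ := U.eq_pure_of_finite
  refine ⟨i, fun b => Bool.eq_iff_iff.2 ?_⟩
  have h : {j | b j = true} ∈ U ↔ {j | b j = true} ∈ (pure i : Ultrafilter ι) := by rw [hi]
  simpa [hU] using h

end Dictator

def PreservesAcyclic {ι : Type*} (g : (ι → Bool) → Bool) (V : Type*) : Prop :=
  ∀ P : ι → V → V → Bool, (∀ i, AcyclicRel (P i)) → AcyclicRel (fun u v => g fun i => P i u v)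

namespace PreservesAcyclic

variable {ι V : Type*} {g : (ι → Bool) → Bool}

theorem apply_const_false [Nonempty V] (hg : PreservesAcyclic g V) :
    g (fun _ => false) = false := by
  inhabit V
  by_contra h
  refine not_acyclicRel_of_loop (x := (default : V)) ?_ (hg (fun _ _ _ => false) fun _ => ?_)
  · simpa using h
  · exact acyclicRel_of_rank (fun _ => 0) (by simp)

theorem apply_and [DecidableEq V] (hg : PreservesAcyclic g V)
    (hneg : ∀ b, g (fun i => !b i) = !g b)
    {x y z : V} (hxy : x ≠ y) (hxz : x ≠ z) (hyz : y ≠ z) {b c : ι → Bool}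
    (hb : g b = true) (hc : g c = true) : g (fun i => b i && c i) = true := by
  by_contra hbc
  have hnbc : g (fun i => !(b i && c i)) = true := (hneg _).trans (by simpa using hbc)
  let P i := triangleRel x y z (b i) (c i) !(b i && c i)
  refine not_acyclicRel_of_three_cycle (x := x) (y := y) (z := z) ?_ ?_ ?_
    (hg P fun i => acyclicRel_triangleRel hxy hxz hyz (by cases b i <;> cases c i <;> rfl))
  all_goals simpa [P, triangleRel, hxy, hxz, hyz, hxy.symm, hxz.symm, hyz.symm, ← Bool.not_and]

end PreservesAcyclic

theorem no_unbiased_nondictatorial_acyclic_aggregation_general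
    {V : Type*} [Finite V] (hV : 3 ≤ Nat.card V) (n : ℕ) :
    ¬ ∃ F : (Fin n → (V → V → Bool)) → (V → V → Bool),
      -- Acyclicity: on every profile of acyclic relations, the output is acyclic
      (∀ P : Fin n → (V → V → Bool), (∀ i, AcyclicRel (P i)) → AcyclicRel (F P)) ∧
      -- Unbiasedness: each edge of the output is decided from the experts' judgments
      -- on that same edge by a single function `g`, neutral between outcomes
      (∃ g : (Fin n → Bool) → Bool,
        (∀ P : Fin n → (V → V → Bool), (∀ i, AcyclicRel (P i)) →
          ∀ x y : V, F P x y = g (fun i => P i x y)) ∧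
        (∀ b : Fin n → Bool, g (fun i => !(b i)) = !(g b))) ∧
      -- Non-dictatorship: no expert's relation is always returned verbatim
      (¬ ∃ i : Fin n, ∀ P : Fin n → (V → V → Bool), (∀ i', AcyclicRel (P i')) →
        ∀ x y : V, F P x y = P i x y) := by
  rintro ⟨F, hF, ⟨g, hFg, hneg⟩, hnotDict⟩
  classical
  have := Fintype.ofFinite V
  obtain ⟨x, y, z, hxy, hxz, hyz⟩ :=
    Fintype.two_lt_card_iff.1 (Nat.card_eq_fintype_card (α := V) ▸ hV)
  have : Nonempty V := ⟨x⟩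
  have hg : PreservesAcyclic g V := fun P hP => by
    simpa only [← hFg P hP] using hF P hP
  obtain ⟨i, hi⟩ := exists_eq_apply_of_selfDual_of_and hneg
    hg.apply_const_false (fun _ _ => hg.apply_and hneg hxy hxz hyz)
  exact hnotDict ⟨i, fun P hP u v => (hFg P hP u v).trans (hi _)⟩

/-- (Theorem 1, after Bradley, Dietrich and List.) On at least three variables, there
is no aggregation rule for profiles of acyclic causal graphs simultaneously satisfying
universal domain, acyclicity of the output, unbiasedness (edgewise aggregation by a
single function `g` that is neutral between positive and negative outcomes), and
non-dictatorship. -/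
theorem no_unbiased_nondictatorial_acyclic_aggregation
    {V : Type*} [Finite V] (hV : 3 ≤ Nat.card V) (n : ℕ) (hn : 1 ≤ n) :
    ¬ ∃ F : (Fin n → (V → V → Bool)) → (V → V → Bool),
      -- Acyclicity: on every profile of acyclic relations, the output is acyclic
      (∀ P : Fin n → (V → V → Bool), (∀ i, AcyclicRel (P i)) → AcyclicRel (F P)) ∧
      -- Unbiasedness: each edge of the output is decided from the experts' judgments
      -- on that same edge by a single function `g`, neutral between outcomes
      (∃ g : (Fin n → Bool) → Bool,
        (∀ P : Fin n → (V → V → Bool), (∀ i, AcyclicRel (P i)) →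
          ∀ x y : V, F P x y = g (fun i => P i x y)) ∧
        (∀ b : Fin n → Bool, g (fun i => !(b i)) = !(g b))) ∧
      -- Non-dictatorship: no expert's relation is always returned verbatim
      (¬ ∃ i : Fin n, ∀ P : Fin n → (V → V → Bool), (∀ i', AcyclicRel (P i')) →
        ∀ x y : V, F P x y = P i x y) :=
  no_unbiased_nondictatorial_acyclic_aggregation_general hV n
end
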